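/- arXiv:2305.06869 — 6 statements merged into one kernel-verified Lean document; each statement's English description precedes it below -/
import Mathlib

section
/- For the adaptive robust loss ρ(ε, α) = (|α−2|/α)((ε²/|α−2| + 1)^{α/2} − 1) with α ≠ 0, α ≠ 2, the limit as α → 2 of ρ(ε, α) equals ε²/2. -/
open Filter Topology

theorem adaptive_loss_limit_alpha_two (ε : ℝ) :
    Tendsto (fun α : ℝ => (|α - 2| / α) * ((ε ^ 2 / |α - 2| + 1) ^ (α / 2) - 1))
      (𝓝[≠] 2) (𝓝 (ε ^ 2 / 2)) := by
  rcases eq_or_ne ε 0 with rfl | hε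
  · have h0 : ∀ α : ℝ, (|α - 2| / α) * (((0:ℝ) ^ 2 / |α - 2| + 1) ^ (α / 2) - 1) = 0 := by
      intro α
      norm_num
    simp only [h0]
    norm_num
  have hε2 : (0:ℝ) < ε ^ 2 := by positivity
  have ht : Tendsto (fun α : ℝ => |α - 2|) (𝓝[≠] 2) (𝓝[>] 0) := by
    rw [tendsto_nhdsWithin_iff]
    constructor
    · have h : Tendsto (fun α : ℝ => |α - 2|) (𝓝 2) (𝓝 |(2:ℝ) - 2|) :=
        (continuous_abs.comp (continuous_id.sub continuous_const)).tendsto 2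
      simpa using h.mono_left nhdsWithin_le_nhds
    · filter_upwards [self_mem_nhdsWithin] with α hα
      exact abs_pos.2 (sub_ne_zero.2 hα)
  have ht0 : Tendsto (fun α : ℝ => |α - 2|) (𝓝[≠] 2) (𝓝 0) :=
    ht.mono_right nhdsWithin_le_nhds
  have hαt : Tendsto (fun α : ℝ => α) (𝓝[≠] 2) (𝓝 2) :=
    tendsto_id.mono_left nhdsWithin_le_nhds
  have h1 : Tendsto (fun α : ℝ => (ε ^ 2 + |α - 2|) ^ (α / 2)) (𝓝[≠] 2) (𝓝 (ε ^ 2)) := by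
    have hbase : Tendsto (fun α : ℝ => ε ^ 2 + |α - 2|) (𝓝[≠] 2) (𝓝 (ε ^ 2)) := by
      simpa using tendsto_const_nhds.add ht0
    have hexp : Tendsto (fun α : ℝ => α / 2) (𝓝[≠] 2) (𝓝 1) := by
      have h := hαt.div_const 2
      norm_num at h
      exact h
    have h := (Real.continuousAt_rpow (ε ^ 2, 1) (Or.inl hε2.ne')).tendsto.comp
      (hbase.prodMk_nhds hexp)
    simpa [Function.comp_def, Real.rpow_one] using h
  have h2 : Tendsto (fun α : ℝ => |α - 2| ^ (1 - α / 2)) (𝓝[≠] 2) (𝓝 1) := by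
    have key : Tendsto (fun α : ℝ => Real.log |α - 2| * (1 - α / 2)) (𝓝[≠] 2) (𝓝 0) := by
      have hx : Tendsto (fun x : ℝ => |Real.log x| * x) (𝓝[>] 0) (𝓝 0) := by
        have h := (tendsto_log_mul_rpow_nhdsGT_zero one_pos).abs
        rw [abs_zero] at h
        refine h.congr' ?_
        filter_upwards [self_mem_nhdsWithin] with x hx
        rw [Real.rpow_one, abs_mul, abs_of_pos (show (0:ℝ) < x from hx)]
      have hg : Tendsto (fun α : ℝ => abs (Real.log |α - 2|) * |α - 2|) (𝓝[≠] 2) (𝓝 0) :=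
        hx.comp ht
      apply squeeze_zero_norm _ hg
      intro α
      rw [Real.norm_eq_abs, abs_mul]
      have h12 : |1 - α / 2| = |α - 2| / 2 := by
        rw [show (1 : ℝ) - α / 2 = -((α - 2) / 2) by ring, abs_neg, abs_div]
        norm_num
      rw [h12]
      have hlog : (0:ℝ) ≤ abs (Real.log |α - 2|) := abs_nonneg _
      nlinarith [abs_nonneg (α - 2)]
    have hexp : Tendsto (fun α : ℝ => Real.exp (Real.log |α - 2| * (1 - α / 2)))
        (𝓝[≠] 2) (𝓝 1) := by
      have h := (Real.continuous_exp.tendsto 0).comp key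
      simpa [Function.comp_def] using h
    refine hexp.congr' ?_
    filter_upwards [self_mem_nhdsWithin] with α hα
    rw [Real.rpow_def_of_pos (abs_pos.2 (sub_ne_zero.2 hα))]
  have hmain : Tendsto
      (fun α : ℝ => ((ε ^ 2 + |α - 2|) ^ (α / 2) * |α - 2| ^ (1 - α / 2) - |α - 2|) / α)
      (𝓝[≠] 2) (𝓝 (ε ^ 2 / 2)) := by
    have h := ((h1.mul h2).sub ht0).div hαt two_ne_zero
    simpa [Pi.div_def] using h
  refine hmain.congr' ?_
  have hne0 : ∀ᶠ α : ℝ in 𝓝[≠] 2, α ≠ 0 :=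
    (eventually_ne_nhds (by norm_num : (2:ℝ) ≠ 0)).filter_mono nhdsWithin_le_nhds
  filter_upwards [self_mem_nhdsWithin, hne0] with α hα hα0
  have htpos : (0:ℝ) < |α - 2| := abs_pos.2 (sub_ne_zero.2 hα)
  set t := |α - 2| with htdef
  have h1' : ε ^ 2 / t + 1 = (ε ^ 2 + t) / t := by
    field_simp
  have h2' : ((ε ^ 2 + t) / t) ^ (α / 2) = (ε ^ 2 + t) ^ (α / 2) / t ^ (α / 2) :=
    Real.div_rpow (by positivity) htpos.le (α / 2)
  have h3' : t ^ (1 - α / 2) = t * (t ^ (α / 2))⁻¹ := by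
    rw [show (1:ℝ) - α / 2 = 1 + (-(α / 2)) by ring, Real.rpow_add htpos,
      Real.rpow_one, Real.rpow_neg htpos.le]
  have htr : t ^ (α / 2) ≠ 0 := (Real.rpow_pos_of_pos htpos _).ne'
  rw [h1', h2', h3']
  field_simp
end

section
/- For the adaptive robust loss ρ(ε, α) = (|α−2|/α)((ε²/|α−2| + 1)^{α/2} − 1), the limit as α → 0 of ρ(ε, α) equals log(ε²/2 + 1). -/
open Filter Topology

theorem adaptive_loss_limit_alpha_zero (ε : ℝ) :
    Tendsto (fun α : ℝ => (|α - 2| / α) * ((ε ^ 2 / |α - 2| + 1) ^ (α / 2) - 1))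
      (𝓝[≠] 0) (𝓝 (Real.log (ε ^ 2 / 2 + 1))) := by
  rcases eq_or_ne ε 0 with rfl | hε
  · simpa using (tendsto_const_nhds : Tendsto (fun _ : ℝ => (0:ℝ)) (𝓝[≠] 0) (𝓝 0))
  have hε2 : (0:ℝ) < ε ^ 2 := by positivity
  set x : ℝ → ℝ := fun α => ε ^ 2 / |α - 2| + 1 with hx
  set y : ℝ → ℝ := fun α => (α / 2) * Real.log (x α) with hy
  -- continuity of log ∘ x at 0
  have hxcont : ContinuousAt x 0 := by
    have : ContinuousAt (fun α : ℝ => |α - 2|) 0 := by fun_prop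
    have h2 : |(0:ℝ) - 2| ≠ 0 := by norm_num
    exact ((continuousAt_const.div this h2).add continuousAt_const)
  have hx0 : x 0 = ε ^ 2 / 2 + 1 := by simp [hx]
  have hx0pos : 0 < x 0 := by rw [hx0]; positivity
  have hlogcont : ContinuousAt (fun α => Real.log (x α)) 0 :=
    (Real.continuousAt_log (ne_of_gt hx0pos)).comp hxcont
  have hlog : Tendsto (fun α => Real.log (x α)) (𝓝[≠] 0)
      (𝓝 (Real.log (ε ^ 2 / 2 + 1))) := by
    have := hlogcont.tendsto
    rw [hx0] at this
    exact this.mono_left nhdsWithin_le_nhds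
  -- eventually: α ≠ 0, |α - 2| > 0, x α > 1
  have hev : ∀ᶠ α in 𝓝[≠] (0:ℝ), α ≠ 0 ∧ 0 < |α - 2| ∧ 1 < x α := by
    have h1 : ∀ᶠ α in 𝓝 (0:ℝ), α < 1 := Filter.Tendsto.eventually_lt_const (by norm_num) tendsto_id
    filter_upwards [self_mem_nhdsWithin, nhdsWithin_le_nhds h1] with α hα h1α
    have habs : 0 < |α - 2| := abs_pos.mpr (by intro h; nlinarith [sub_eq_zero.mp h])
    refine ⟨hα, habs, ?_⟩
    have : 0 < ε ^ 2 / |α - 2| := div_pos hε2 habs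
    simp only [hx]; linarith
  -- (exp t - 1)/t → 1
  have hg : Tendsto (fun t : ℝ => (Real.exp t - 1) / t) (𝓝[≠] 0) (𝓝 1) := by
    have h := Real.hasDerivAt_exp 0
    rw [hasDerivAt_iff_tendsto_slope] at h
    simpa [slope_fun_def, Real.exp_zero, div_eq_inv_mul] using h
  -- y → 0 within ≠ 0
  have hy0 : Tendsto y (𝓝[≠] 0) (𝓝[≠] 0) := by
    rw [tendsto_nhdsWithin_iff]
    constructor
    · have : Tendsto y (𝓝[≠] 0) (𝓝 ((0 / 2) * Real.log (x 0))) := by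
        exact ((tendsto_id.div_const 2).mono_left nhdsWithin_le_nhds).mul
          (hlogcont.tendsto.mono_left nhdsWithin_le_nhds) |>.congr' (by
            filter_upwards with α
            simp [hy, hx0])
      simpa using this
    · filter_upwards [hev] with α ⟨hα, habs, hx1⟩
      have hlogpos : 0 < Real.log (x α) := Real.log_pos hx1
      simp only [Set.mem_compl_iff, Set.mem_singleton_iff, hy]
      exact mul_ne_zero (by positivity) (ne_of_gt hlogpos)
  -- the main factorization
  have hfact : ∀ᶠ α in 𝓝[≠] (0:ℝ),
      |α - 2| * ((Real.exp (y α) - 1) / y α) * ((1/2) * Real.log (x α))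
        = (|α - 2| / α) * ((ε ^ 2 / |α - 2| + 1) ^ (α / 2) - 1) := by
    filter_upwards [hev] with α ⟨hα, habs, hx1⟩
    have hxpos : 0 < x α := lt_trans one_pos hx1
    have hlogpos : 0 < Real.log (x α) := Real.log_pos hx1
    have hyne : y α ≠ 0 := mul_ne_zero (by positivity) (ne_of_gt hlogpos)
    have hrpow : (ε ^ 2 / |α - 2| + 1) ^ (α / 2) = Real.exp (y α) := by
      rw [Real.rpow_def_of_pos hxpos, hy]
      ring_nf
    rw [hrpow]
    field_simp [hy]
    ring
  have hmain : Tendsto (fun α => |α - 2| * ((Real.exp (y α) - 1) / y α)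
      * ((1/2) * Real.log (x α))) (𝓝[≠] 0)
      (𝓝 (|(0:ℝ) - 2| * 1 * ((1/2) * Real.log (ε ^ 2 / 2 + 1)))) := by
    refine Tendsto.mul (Tendsto.mul ?_ (hg.comp hy0)) (tendsto_const_nhds.mul hlog)
    exact ((continuous_abs.comp (continuous_id.sub continuous_const)).tendsto 0).mono_left
      nhdsWithin_le_nhds
  have : |(0:ℝ) - 2| * 1 * ((1/2) * Real.log (ε ^ 2 / 2 + 1))
      = Real.log (ε ^ 2 / 2 + 1) := by
      rw [show |(0:ℝ) - 2| = 2 by norm_num]; ring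
  rw [this] at hmain
  exact hmain.congr' hfact
end

section
/- For the adaptive robust loss ρ(ε, α) = (|α−2|/α)((ε²/|α−2| + 1)^{α/2} − 1), the limit as α → −∞ of ρ(ε, α) equals 1 − exp(−ε²/2). -/
open Filter Topology

theorem adaptive_loss_limit_alpha_neg_infty (ε : ℝ) :
    Tendsto (fun α : ℝ => (|α - 2| / α) * ((ε ^ 2 / |α - 2| + 1) ^ (α / 2) - 1))
      atBot (𝓝 (1 - Real.exp (-(ε ^ 2) / 2))) := by
  have h2 : Tendsto (fun α : ℝ => (2 - α) / 2) atBot atTop := by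
    apply Tendsto.atTop_div_const (by norm_num : (0:ℝ) < 2)
    exact tendsto_atTop_add_const_left _ _ tendsto_neg_atBot_atTop
  have hG : Tendsto (fun α : ℝ => (1 + (ε ^ 2 / 2) / ((2 - α) / 2)) ^ ((2 - α) / 2))
      atBot (𝓝 (Real.exp (ε ^ 2 / 2))) :=
    (Real.tendsto_one_add_div_rpow_exp (ε ^ 2 / 2)).comp h2
  have hB : Tendsto (fun α : ℝ => 1 + (ε ^ 2 / 2) / ((2 - α) / 2)) atBot (𝓝 1) := by
    have h0 : Tendsto (fun α : ℝ => (ε ^ 2 / 2) / ((2 - α) / 2)) atBot (𝓝 0) :=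
      tendsto_const_nhds.div_atTop h2
    simpa using tendsto_const_nhds.add h0
  have hA : Tendsto (fun α : ℝ => (2 - α) / α) atBot (𝓝 (-1)) := by
    have h1 : Tendsto (fun α : ℝ => 2 / α - 1) atBot (𝓝 (-1)) := by
      have : Tendsto (fun α : ℝ => 2 / α) atBot (𝓝 0) := by
        have h := (tendsto_const_nhds (x := (2:ℝ))).div_atTop tendsto_neg_atBot_atTop
        simpa [div_neg] using h.neg
      simpa using this.sub tendsto_const_nhds
    refine h1.congr' ?_
    filter_upwards [eventually_lt_atBot (0:ℝ)] with α hα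
    have : α ≠ 0 := ne_of_lt hα
    field_simp
  have hMain : Tendsto (fun α : ℝ => ((2 - α) / α) *
      ((1 + (ε ^ 2 / 2) / ((2 - α) / 2)) *
        ((1 + (ε ^ 2 / 2) / ((2 - α) / 2)) ^ ((2 - α) / 2))⁻¹ - 1))
      atBot (𝓝 ((-1) * (1 * (Real.exp (ε ^ 2 / 2))⁻¹ - 1))) :=
    hA.mul ((hB.mul (hG.inv₀ (Real.exp_ne_zero _))).sub tendsto_const_nhds)
  have hval : (-1) * (1 * (Real.exp (ε ^ 2 / 2))⁻¹ - 1) = 1 - Real.exp (-(ε ^ 2) / 2) := by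
    rw [← Real.exp_neg]
    ring_nf
  rw [← hval]
  refine hMain.congr' ?_
  filter_upwards [eventually_lt_atBot (0:ℝ)] with α hα
  have hαne : α ≠ 0 := ne_of_lt hα
  have habs : |α - 2| = 2 - α := by rw [abs_of_neg (by linarith : α - 2 < 0)]; ring
  have h2α : (0:ℝ) < 2 - α := by linarith
  have hb : (0:ℝ) < 1 + (ε ^ 2 / 2) / ((2 - α) / 2) := by
    have : 0 ≤ (ε ^ 2 / 2) / ((2 - α) / 2) := by positivity
    linarith
  have hdiv : ε ^ 2 / |α - 2| = (ε ^ 2 / 2) / ((2 - α) / 2) := by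
    rw [habs]; field_simp
  have hexp : (ε ^ 2 / |α - 2| + 1) ^ (α / 2) =
      (1 + (ε ^ 2 / 2) / ((2 - α) / 2)) *
        ((1 + (ε ^ 2 / 2) / ((2 - α) / 2)) ^ ((2 - α) / 2))⁻¹ := by
    rw [hdiv, add_comm]
    rw [show α / 2 = 1 + (-((2 - α) / 2)) by ring]
    rw [Real.rpow_add hb, Real.rpow_one, Real.rpow_neg hb.le]
  rw [habs] at hexp ⊢
  rw [hexp]
end

section
/- Black–Rangarajan duality for the adaptive surrogate loss: for fixed f < 2, f ≠ 0, and any ε ∈ ℝ, setting w = (ε²/|f−2| + 1)^{f/2−1} ∈ (0,1], one has ρ_f(ε) = (1/2)wε² + Φ_f(w), where ρ_f(ε) = (|f−2|/f)((ε²/|f−2| + 1)^{f/2} − 1) and Φ_f(w) = (|f−2|/f)(w^{f/(f−2)} − 1) − w·(|f−2|/2)·(w^{2/(f−2)} − 1). -/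
theorem black_rangarajan_duality (f : ℝ) (hf : f < 2) (hf0 : f ≠ 0) (ε : ℝ) :
    (ε ^ 2 / |f - 2| + 1) ^ (f / 2 - 1) ∈ Set.Ioc (0 : ℝ) 1 ∧
      (|f - 2| / f) * ((ε ^ 2 / |f - 2| + 1) ^ (f / 2) - 1) =
        (1 / 2) * (ε ^ 2 / |f - 2| + 1) ^ (f / 2 - 1) * ε ^ 2 +
          ((|f - 2| / f) * (((ε ^ 2 / |f - 2| + 1) ^ (f / 2 - 1)) ^ (f / (f - 2)) - 1) -
            (ε ^ 2 / |f - 2| + 1) ^ (f / 2 - 1) * (|f - 2| / 2) *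
              (((ε ^ 2 / |f - 2| + 1) ^ (f / 2 - 1)) ^ (2 / (f - 2)) - 1)) := by
  have hf2 : f - 2 ≠ 0 := by linarith
  have habs : |f - 2| = 2 - f := by rw [abs_of_neg (by linarith)]; ring
  set A : ℝ := ε ^ 2 / |f - 2| + 1 with hA
  have hAge : (1 : ℝ) ≤ A := by
    have h : 0 ≤ ε ^ 2 / |f - 2| := div_nonneg (sq_nonneg ε) (abs_nonneg _)
    rw [hA]; linarith
  have hApos : (0 : ℝ) < A := by linarith
  have hε : ε ^ 2 = (2 - f) * (A - 1) := by
    have h2f : (0:ℝ) < 2 - f := by linarith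
    rw [hA, habs]; field_simp [h2f.ne']; ring
  have h1 : (A ^ (f / 2 - 1)) ^ (f / (f - 2)) = A ^ (f / 2) := by
    rw [← Real.rpow_mul hApos.le]
    congr 1
    field_simp
  have h2 : (A ^ (f / 2 - 1)) ^ (2 / (f - 2)) = A := by
    rw [← Real.rpow_mul hApos.le]
    have : (f / 2 - 1) * (2 / (f - 2)) = 1 := by field_simp
    rw [this, Real.rpow_one]
  constructor
  · constructor
    · exact Real.rpow_pos_of_pos hApos _
    · calc A ^ (f / 2 - 1) ≤ A ^ (0:ℝ) :=
            Real.rpow_le_rpow_of_exponent_le hAge (by linarith)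
        _ = 1 := Real.rpow_zero A
  · rw [h1, h2, hε, habs]
    ring
end

section
/- Given w ∈ (0,1], the minimizer of g(w) = (1/2)wε² + Φ_f(w) over (0,1], where Φ_f is the outlier process function of the adaptive surrogate loss with f < 2, f ≠ 0, is w* = (ε²/|f−2| + 1)^{f/2 − 1} when this value lies in (0,1]. -/
set_option maxHeartbeats 1000000

lemma bern_nonpos {t p : ℝ} (ht : 0 < t) (hp : p ≤ 0) : 1 + p * (t - 1) ≤ t ^ p := by
  have hu : 0 < t⁻¹ := inv_pos.mpr ht
  have h := one_add_mul_self_le_rpow_one_add (s := t⁻¹ - 1) (by linarith) (p := -p + 1)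
    (by linarith)
  have h2 : (1 + (t⁻¹ - 1)) ^ (-p + 1) = t ^ p * t⁻¹ := by
    have : 1 + (t⁻¹ - 1) = t⁻¹ := by ring
    rw [this, Real.rpow_add hu, Real.rpow_one, Real.inv_rpow ht.le, Real.rpow_neg ht.le, inv_inv]
  rw [h2] at h
  have h3 := mul_le_mul_of_nonneg_right h ht.le
  have htt : t⁻¹ * t = 1 := inv_mul_cancel₀ ht.ne'
  have h4 : t ^ p * t⁻¹ * t = t ^ p := by rw [mul_assoc, htt, mul_one]
  have h5 : (1 + (-p + 1) * (t⁻¹ - 1)) * t = 1 + p * (t - 1) := by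
    linear_combination (1 - p) * htt
  rw [h4, h5] at h3
  exact h3

theorem outlier_process_minimizer (f : ℝ) (hf : f < 2) (hf0 : f ≠ 0) (ε : ℝ) (hε : ε ≠ 0)
    (hwstar : (ε ^ 2 / |f - 2| + 1) ^ (f / 2 - 1) ∈ Set.Ioc (0 : ℝ) 1) :
    ∀ w ∈ Set.Ioc (0 : ℝ) 1,
      ((ε ^ 2 / |f - 2| + 1) ^ (f / 2 - 1)) * ε ^ 2 / 2 +
          ((|f - 2| / f) * (((ε ^ 2 / |f - 2| + 1) ^ (f / 2 - 1)) ^ (f / (f - 2)) - 1) -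
            ((ε ^ 2 / |f - 2| + 1) ^ (f / 2 - 1)) * |f - 2| / 2 *
              (((ε ^ 2 / |f - 2| + 1) ^ (f / 2 - 1)) ^ (2 / (f - 2)) - 1)) ≤
        w * ε ^ 2 / 2 +
          ((|f - 2| / f) * (w ^ (f / (f - 2)) - 1) -
            w * |f - 2| / 2 * (w ^ (2 / (f - 2)) - 1)) := by
  intro w hw
  obtain ⟨hw0, hw1⟩ := hw
  have hf2 : f - 2 < 0 := by linarith
  have hf2ne : f - 2 ≠ 0 := ne_of_lt hf2
  have habs : |f - 2| = 2 - f := by rw [abs_of_neg hf2]; ring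
  rw [habs] at hwstar ⊢
  have he2 : (0:ℝ) < ε ^ 2 := by positivity
  have ha0 : (0:ℝ) < 2 - f := by linarith
  set c : ℝ := ε ^ 2 / (2 - f) + 1 with hcdef
  have hc0 : 0 < c := by rw [hcdef]; positivity
  set W : ℝ := c ^ (f / 2 - 1) with hWdef
  obtain ⟨hW0, hW1⟩ := hwstar
  have hpe : f / (f - 2) = 2 / (f - 2) + 1 := by field_simp; ring
  have hqe : (f / 2 - 1) * (2 / (f - 2)) = 1 := by field_simp
  have hWq : W ^ (2 / (f - 2)) = c := by
    rw [hWdef, ← Real.rpow_mul hc0.le, hqe, Real.rpow_one]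
  have hWp : W ^ (f / (f - 2)) = c * W := by
    rw [hpe, Real.rpow_add hW0, Real.rpow_one, hWq]
  have hwpq : w ^ (f / (f - 2)) = w ^ (2 / (f - 2)) * w := by
    rw [hpe, Real.rpow_add hw0, Real.rpow_one]
  -- rewrite the w-side product term
  have hwB : w * (2 - f) / 2 * (w ^ (2 / (f - 2)) - 1)
      = (2 - f) / 2 * (w ^ (f / (f - 2)) - w) := by
    linear_combination (-(2 - f) / 2) * hwpq
  rw [hWq, hWp, hwB]
  set B : ℝ := w ^ (f / (f - 2)) with hBdef
  set p : ℝ := f / (f - 2) with hpdef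
  set k : ℝ := (2 - f) ^ 2 / (2 * f) with hkdef
  have hWne : W ≠ 0 := ne_of_gt hW0
  have ht0 : 0 < w / W := div_pos hw0 hW0
  have hdiv : (w / W) ^ p = B / (c * W) := by
    rw [Real.div_rpow hw0.le hW0.le, hBdef, hWp]
  have hAexp : (c * W) * (1 + p * (w / W - 1)) = c * W + c * p * (w - W) := by
    field_simp
  -- the key inequality, in both cases:  k * ((c*W) * (1 + p*(w/W-1))) ≤ k * B
  have h2 : k * (c * W + c * p * (w - W)) ≤ k * B := by
    rw [← hAexp]
    rcases lt_or_gt_of_ne hf0 with hfn | hfp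
    · -- f < 0 : 0 ≤ p ≤ 1, k ≤ 0
      have hp0 : 0 ≤ p := le_of_lt (div_pos_of_neg_of_neg (by linarith) hf2)
      have hp1 : p ≤ 1 := by
        rw [hpe]
        have : 2 / (f - 2) ≤ 0 := le_of_lt (div_neg_of_pos_of_neg two_pos hf2)
        linarith
      have hk0 : k ≤ 0 := by
        rw [hkdef]
        apply div_nonpos_of_nonneg_of_nonpos (by positivity) (by linarith)
      have hB := rpow_one_add_le_one_add_mul_self (s := w / W - 1) (by linarith) hp0 hp1
      have hs : 1 + (w / W - 1) = w / W := by ring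
      rw [hs] at hB
      have hBcW : (c * W) * (w / W) ^ p = B := by
        rw [hdiv]
        field_simp
      have := mul_le_mul_of_nonneg_left hB (le_of_lt (by positivity : (0:ℝ) < c * W))
      rw [hBcW] at this
      exact mul_le_mul_of_nonpos_left this hk0
    · -- 0 < f : p ≤ 0, k ≥ 0
      have hp0 : p ≤ 0 := by
        rw [hpdef]
        exact div_nonpos_of_nonneg_of_nonpos hfp.le hf2.le
      have hk0 : 0 ≤ k := by rw [hkdef]; positivity
      have hB := bern_nonpos ht0 hp0
      have hBcW : (c * W) * (w / W) ^ p = B := by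
        rw [hdiv]
        field_simp
      have := mul_le_mul_of_nonneg_left hB (le_of_lt (by positivity : (0:ℝ) < c * W))
      rw [hBcW] at this
      exact mul_le_mul_of_nonneg_left this hk0
  -- now conclude by linear arithmetic plus the identity
  have hident : (w * ε ^ 2 / 2 + ((2 - f) / f * (B - 1) - (2 - f) / 2 * (B - w)))
      - (W * ε ^ 2 / 2 + ((2 - f) / f * (c * W - 1) - W * (2 - f) / 2 * (c - 1)))
      = k * B - k * (c * W + c * p * (w - W)) := by
    rw [hkdef, hpdef, hcdef]
    field_simp
    ring
  rw [← sub_nonneg, hident]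
  linarith [h2]
end

section
/- For fixed ε ≠ 0 and fixed μ > 0, the surrogate loss ρ_f(ε) = (|f−2|/f)((ε²/|f−2| + 1)^{f/2} − 1) evaluated along the shape function f = (αμ+2)/(μ+1) converges to ε²/2 as μ → 0⁺, for any α ≤ 2 with α ≠ 2. -/
open Filter Topology

theorem surrogate_loss_convex_limit (ε : ℝ) (hε : ε ≠ 0) (α : ℝ) (hα : α ≤ 2) (hα2 : α ≠ 2) :
    Tendsto (fun μ : ℝ =>
        (|(α * μ + 2) / (μ + 1) - 2| / ((α * μ + 2) / (μ + 1))) *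
          ((ε ^ 2 / |(α * μ + 2) / (μ + 1) - 2| + 1) ^ ((α * μ + 2) / (μ + 1) / 2) - 1))
      (𝓝[>] 0) (𝓝 (ε ^ 2 / 2)) := by
  have hα' : 0 < 2 - α := by
    rcases lt_or_eq_of_le hα with h | h
    · linarith
    · exact absurd h hα2
  have hε2 : 0 < ε ^ 2 := by positivity
  -- definitions
  set F : ℝ → ℝ := fun μ => (α * μ + 2) / (μ + 1) with hF
  set d : ℝ → ℝ := fun μ => (2 - α) * μ / (μ + 1) with hd
  -- basic facts on (0,∞)
  have hmem : ∀ᶠ μ in 𝓝[>] (0:ℝ), 0 < μ := eventually_mem_nhdsWithin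
  -- tendsto of F to 2
  have hFcont : Tendsto F (𝓝[>] 0) (𝓝 2) := by
    have : ContinuousAt F 0 := by
      apply ContinuousAt.div
      · fun_prop
      · fun_prop
      · norm_num
    have h0 : F 0 = 2 := by simp [hF]
    simpa [h0] using this.continuousWithinAt.tendsto
  -- tendsto of d to 0 within >0
  have hdpos : ∀ μ : ℝ, 0 < μ → 0 < d μ := by
    intro μ hμ
    have : 0 < μ + 1 := by linarith
    exact div_pos (mul_pos hα' hμ) this
  have hdto : Tendsto d (𝓝[>] 0) (𝓝[>] 0) := by
    rw [tendsto_nhdsWithin_iff]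
    constructor
    · have : ContinuousAt d 0 := by
        apply ContinuousAt.div
        · fun_prop
        · fun_prop
        · norm_num
      have h0 : d 0 = 0 := by simp [hd]
      simpa [h0] using this.continuousWithinAt.tendsto
    · exact hmem.mono fun μ hμ => hdpos μ hμ
  have hd0 : Tendsto d (𝓝[>] 0) (𝓝 0) := hdto.mono_right nhdsWithin_le_nhds
  -- T4 : (d μ) ^ (d μ / 2) → 1
  have T4 : Tendsto (fun μ => (d μ) ^ (d μ / 2)) (𝓝[>] 0) (𝓝 1) := by
    have hx : Tendsto (fun x : ℝ => x ^ (x / 2)) (𝓝[>] 0) (𝓝 1) := by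
      have hlog : Tendsto (fun x : ℝ => x / 2 * Real.log x) (𝓝[>] 0) (𝓝 0) := by
        have := tendsto_log_mul_rpow_nhdsGT_zero (r := 1) one_pos
        simp only [Real.rpow_one] at this
        have := this.const_mul (1/2 : ℝ)
        simpa [mul_comm, mul_assoc, mul_left_comm, div_eq_mul_inv] using this
      have : Tendsto (fun x : ℝ => Real.exp (x / 2 * Real.log x)) (𝓝[>] 0) (𝓝 1) := by
        simpa [Function.comp_def] using (Real.continuous_exp.continuousAt.tendsto.comp hlog)
      refine this.congr' ?_
      filter_upwards [eventually_mem_nhdsWithin] with x hx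
      rw [Real.rpow_def_of_pos hx, mul_comm]
    exact hx.comp hdto
  -- T3 : (ε² + d μ) ^ (F μ / 2) → ε²
  have T3 : Tendsto (fun μ => (ε ^ 2 + d μ) ^ (F μ / 2)) (𝓝[>] 0) (𝓝 (ε ^ 2)) := by
    have hb : Tendsto (fun μ => ε ^ 2 + d μ) (𝓝[>] 0) (𝓝 (ε ^ 2)) := by
      simpa using (tendsto_const_nhds.add hd0)
    have he : Tendsto (fun μ => F μ / 2) (𝓝[>] 0) (𝓝 1) := by
      have := hFcont.div_const 2
      norm_num at this
      exact this
    have := hb.rpow he (Or.inl (ne_of_gt hε2))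
    simpa using this
  -- combine
  have Tmain : Tendsto (fun μ => (1 / F μ) * ((ε ^ 2 + d μ) ^ (F μ / 2) * (d μ) ^ (d μ / 2) - d μ))
      (𝓝[>] 0) (𝓝 (ε ^ 2 / 2)) := by
    have hinv : Tendsto (fun μ => 1 / F μ) (𝓝[>] 0) (𝓝 (1 / 2)) := by
      exact (tendsto_const_nhds.div hFcont (by norm_num))
    have hprod : Tendsto (fun μ => (ε ^ 2 + d μ) ^ (F μ / 2) * (d μ) ^ (d μ / 2) - d μ)
        (𝓝[>] 0) (𝓝 (ε ^ 2)) := by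
      have := (T3.mul T4).sub hd0
      simpa using this
    have := hinv.mul hprod
    simpa [div_eq_mul_inv, one_mul, mul_comm] using this
  -- eventual equality
  have hFev : ∀ᶠ μ in 𝓝[>] (0:ℝ), 0 < F μ := hFcont.eventually (eventually_gt_nhds (by norm_num))
  refine Tmain.congr' ?_
  filter_upwards [hmem, hFev] with μ hμ hFμ
  have hμ1 : (0:ℝ) < μ + 1 := by linarith
  have hdμ : 0 < d μ := hdpos μ hμ
  have habs : |F μ - 2| = d μ := by
    have : F μ - 2 = -(d μ) := by
      simp only [hF, hd]
      field_simp
      ring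
    rw [this, abs_neg, abs_of_pos hdμ]
  have hFd : F μ / 2 + d μ / 2 = 1 := by
    have : F μ + d μ = 2 := by
      simp only [hF, hd]
      field_simp
      ring
    linarith
  have key : ε ^ 2 / d μ + 1 = (ε ^ 2 + d μ) / d μ := by
    field_simp
  -- now compute
  show (1 / F μ) * ((ε ^ 2 + d μ) ^ (F μ / 2) * (d μ) ^ (d μ / 2) - d μ)
      = (|F μ - 2| / F μ) * ((ε ^ 2 / |F μ - 2| + 1) ^ (F μ / 2) - 1)
  rw [habs, key, Real.div_rpow (by positivity) hdμ.le]
  have hq : (d μ) ^ (d μ / 2) = d μ / (d μ) ^ (F μ / 2) := by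
    have h1 : d μ / 2 = 1 - F μ / 2 := by linarith
    rw [h1, Real.rpow_sub hdμ, Real.rpow_one]
  have hne : (d μ) ^ (F μ / 2) ≠ 0 := ne_of_gt (Real.rpow_pos_of_pos hdμ _)
  rw [hq]
  field_simp
end
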